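/- arXiv:0903.1676 — 3 statements merged into one kernel-verified Lean document; each statement's English description precedes it below -/
import Mathlib

section
/- For every real θ > 2, the function f_θ(x) = (θ + √(1 + x²))·arcsinh(x)/x has a unique minimum on (0, ∞); that is, there exists a unique x₀ > 0 such that f_θ(x₀) < f_θ(x) for all x > 0 with x ≠ x₀. -/
/-!
Substituting `x = sinh t` turns `f_θ` into `fSinh θ t = (θ + cosh t) t / sinh t`, whose derivative
is `(t cosh t - sinh t) / sinh² t · (critParam t - θ)`. The ratio `critParam` is strictly increasing
on `(0, ∞)`, lies below `2 cosh t` and is unbounded, so for `θ > 2` it takes the value `θ` exactly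
once, at some `t₀`; `fSinh θ` decreases before `t₀` and increases after it, so `x₀ = sinh t₀` is the
unique strict minimiser. The hyperbolic inequalities behind this come from a chain of functions
vanishing at `0`, each the derivative of the next.
-/

open Real Set Filter Topology

lemma pos_of_hasDerivAt_of_pos {g g' : ℝ → ℝ} (hg : ∀ t, HasDerivAt g (g' t) t)
    (hg0 : g 0 = 0) (hg' : ∀ t, 0 < t → 0 < g' t) {t : ℝ} (ht : 0 < t) : 0 < g t := by
  have hmono : StrictMonoOn g (Ici 0) :=
    strictMonoOn_of_hasDerivWithinAt_pos (convex_Ici 0)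
      (fun t _ => (hg t).continuousAt.continuousWithinAt)
      (fun t _ => (hg t).hasDerivWithinAt)
      (fun t ht => hg' t (by simpa using ht))
  simpa [hg0] using hmono self_mem_Ici ht.le ht

lemma apply_lt_of_hasDerivAt_neg_of_pos {f f' : ℝ → ℝ} {a c : ℝ} (hac : a < c)
    (hf : ∀ t, a < t → HasDerivAt f (f' t) t) (hneg : ∀ t, a < t → t < c → f' t < 0)
    (hpos : ∀ t, c < t → 0 < f' t) {t : ℝ} (ht : a < t) (htc : t ≠ c) : f c < f t := by
  rcases htc.lt_or_gt with hlt | hgt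
  · have hanti : StrictAntiOn f (Ioc a c) := by
      refine strictAntiOn_of_hasDerivWithinAt_neg (convex_Ioc a c)
        (fun s hs => (hf s hs.1).continuousAt.continuousWithinAt)
        (fun s hs => (hf s ?_).hasDerivWithinAt) (fun s hs => ?_)
      · rw [interior_Ioc] at hs; exact hs.1
      · rw [interior_Ioc] at hs; exact hneg s hs.1 hs.2
    exact hanti ⟨ht, hlt.le⟩ ⟨hac, le_rfl⟩ hlt
  · have hmono : StrictMonoOn f (Ici c) := by
      refine strictMonoOn_of_hasDerivWithinAt_pos (convex_Ici c)
        (fun s hs => (hf s (hac.trans_le hs)).continuousAt.continuousWithinAt)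
        (fun s hs => (hf s ?_).hasDerivWithinAt) (fun s hs => ?_)
      · rw [interior_Ici] at hs; exact hac.trans hs
      · rw [interior_Ici] at hs; exact hpos s hs
    exact hmono self_mem_Ici hgt.le hgt

section Hyperbolic

variable {t : ℝ}

lemma sinh_lt_mul_cosh (ht : 0 < t) : sinh t < t * cosh t := by
  have := pos_of_hasDerivAt_of_pos (g := fun t => t * cosh t - sinh t)
    (fun t => ((hasDerivAt_id' t).mul (hasDerivAt_cosh t)).sub (hasDerivAt_sinh t)
      |>.congr_deriv (show _ = t * sinh t by ring))
    (by simp) (fun t ht => mul_pos ht (sinh_pos_iff.2 ht)) ht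
  linarith

lemma two_mul_cosh_lt_mul_sinh_add_two (ht : 0 < t) : 2 * cosh t < t * sinh t + 2 := by
  have := pos_of_hasDerivAt_of_pos (g := fun t => t * sinh t + 2 - 2 * cosh t)
    (fun t => (((hasDerivAt_id' t).mul (hasDerivAt_sinh t)).add_const 2).sub
      ((hasDerivAt_cosh t).const_mul 2) |>.congr_deriv (show _ = t * cosh t - sinh t by ring))
    (by simp) (fun t ht => sub_pos.2 (sinh_lt_mul_cosh ht)) ht
  linarith

lemma three_mul_sinh_lt_mul_cosh_add_two_mul (ht : 0 < t) :
    3 * sinh t < t * cosh t + 2 * t := by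
  have := pos_of_hasDerivAt_of_pos (g := fun t => t * cosh t + 2 * t - 3 * sinh t)
    (fun t => (((hasDerivAt_id' t).mul (hasDerivAt_cosh t)).add
      ((hasDerivAt_id' t).const_mul 2)).sub ((hasDerivAt_sinh t).const_mul 3)
      |>.congr_deriv (show _ = t * sinh t + 2 - 2 * cosh t by ring))
    (by simp) (fun t ht => by linarith [two_mul_cosh_lt_mul_sinh_add_two ht]) ht
  linarith

lemma four_mul_cosh_lt_mul_sinh_add_sq_add_four (ht : 0 < t) :
    4 * cosh t < t * sinh t + t ^ 2 + 4 := by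
  have := pos_of_hasDerivAt_of_pos (g := fun t => t * sinh t + t ^ 2 + 4 - 4 * cosh t)
    (fun t => ((((hasDerivAt_id' t).mul (hasDerivAt_sinh t)).add (hasDerivAt_pow 2 t)).add_const
      4).sub ((hasDerivAt_cosh t).const_mul 4) |>.congr_deriv
      (show _ = t * cosh t + 2 * t - 3 * sinh t by
        simp only [Nat.cast_ofNat, Nat.add_one_sub_one, pow_one]; ring))
    (by simp) (fun t ht => by linarith [three_mul_sinh_lt_mul_cosh_add_two_mul ht]) ht
  linarith

lemma sq_div_four_lt_sinh (ht : 0 < t) : t ^ 2 / 4 < sinh t := by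
  have h₁ := quadratic_le_exp_of_nonneg ht.le
  have h₂ : exp (-t) < 1 := exp_lt_one_iff.2 (neg_lt_zero.2 ht)
  rw [sinh_eq]
  linarith

end Hyperbolic

/-- `t ↦ f_θ (sinh t)` has a critical point at `t > 0` exactly when `θ = critParam t`. -/
noncomputable def critParam (t : ℝ) : ℝ := (sinh t * cosh t - t) / (t * cosh t - sinh t)

section CritParam

variable {t : ℝ}

lemma hasDerivAt_critParam (ht : 0 < t) :
    HasDerivAt critParam (sinh t * (t * sinh t * cosh t + t ^ 2 - 2 * sinh t ^ 2) /
      (t * cosh t - sinh t) ^ 2) t := by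
  have hN : HasDerivAt (fun t => sinh t * cosh t - t) (cosh t * cosh t + sinh t * sinh t - 1) t :=
    ((hasDerivAt_sinh t).mul (hasDerivAt_cosh t)).sub (hasDerivAt_id' t)
  have hD : HasDerivAt (fun t => t * cosh t - sinh t) (1 * cosh t + t * sinh t - cosh t) t :=
    ((hasDerivAt_id' t).mul (hasDerivAt_cosh t)).sub (hasDerivAt_sinh t)
  refine (hN.div hD (sub_pos.2 (sinh_lt_mul_cosh ht)).ne').congr_deriv ?_
  congr 1
  linear_combination (t * cosh t - sinh t) * cosh_sq t

lemma strictMonoOn_critParam : StrictMonoOn critParam (Ioi 0) := by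
  refine strictMonoOn_of_hasDerivWithinAt_pos (convex_Ioi 0)
    (fun t ht => (hasDerivAt_critParam ht).continuousAt.continuousWithinAt)
    (fun t ht => (hasDerivAt_critParam (by simpa using ht)).hasDerivWithinAt) (fun t ht => ?_)
  rw [interior_Ioi] at ht
  have h := four_mul_cosh_lt_mul_sinh_add_sq_add_four (mul_pos two_pos ht)
  rw [cosh_two_mul, sinh_two_mul] at h
  have hQ : 0 < t * sinh t * cosh t + t ^ 2 - 2 * sinh t ^ 2 := by
    nlinarith [cosh_sq t]
  exact div_pos (mul_pos (sinh_pos_iff.2 ht) hQ) (pow_pos (sub_pos.2 (sinh_lt_mul_cosh ht)) 2)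

lemma critParam_lt_two_mul_cosh (ht : 0 < t) : critParam t < 2 * cosh t := by
  have h := three_mul_sinh_lt_mul_cosh_add_two_mul (mul_pos two_pos ht)
  rw [cosh_two_mul, sinh_two_mul] at h
  rw [critParam, div_lt_iff₀ (sub_pos.2 (sinh_lt_mul_cosh ht))]
  nlinarith [cosh_sq t]

lemma sinh_div_self_sub_one_lt_critParam (ht : 0 < t) : sinh t / t - 1 < critParam t := by
  have hD := sub_pos.2 (sinh_lt_mul_cosh ht)
  have hsinh := self_lt_sinh_iff.2 ht
  have hcosh := one_lt_cosh.2 ht.ne'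
  rw [critParam, lt_div_iff₀ hD, div_sub_one ht.ne', div_mul_eq_mul_div, div_lt_iff₀ ht]
  nlinarith [mul_lt_mul_of_pos_left hsinh ht, mul_lt_mul_of_pos_left hcosh (pow_pos ht 2)]

lemma exists_lt_critParam (θ : ℝ) : ∃ t, 0 < t ∧ θ < critParam t := by
  set t := 4 * |θ| + 4
  have ht : 0 < t := by positivity
  refine ⟨t, ht, lt_of_le_of_lt ?_ (sinh_div_self_sub_one_lt_critParam ht)⟩
  have : t / 4 ≤ sinh t / t := by
    rw [le_div_iff₀ ht]; linarith [sq_div_four_lt_sinh ht]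
  linarith [le_abs_self θ]

lemma exists_critParam_eq {θ : ℝ} (hθ : 2 < θ) : ∃ t, 0 < t ∧ critParam t = θ := by
  have hcosh : ∀ᶠ t in 𝓝[>] 0, 2 * cosh t < θ := nhdsWithin_le_nhds <|
    (continuous_const.mul continuous_cosh).tendsto' 0 2 (by simp) |>.eventually (gt_mem_nhds hθ)
  obtain ⟨t₁, ht₁', ht₁⟩ := (hcosh.and self_mem_nhdsWithin).exists
  obtain ⟨t₂, ht₂, hθt₂⟩ := exists_lt_critParam θ
  have hlt₁ : critParam t₁ < θ := (critParam_lt_two_mul_cosh ht₁).trans ht₁'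
  have ht₁₂ : t₁ ≤ t₂ := ((strictMonoOn_critParam.lt_iff_lt ht₁ ht₂).1 (hlt₁.trans hθt₂)).le
  have hcont : ContinuousOn critParam (Icc t₁ t₂) := fun s hs =>
    (hasDerivAt_critParam ((mem_Ioi.1 ht₁).trans_le hs.1)).continuousAt.continuousWithinAt
  obtain ⟨t₀, ht₀, hθ₀⟩ := intermediate_value_Icc ht₁₂ hcont ⟨hlt₁.le, hθt₂.le⟩
  exact ⟨t₀, (mem_Ioi.1 ht₁).trans_le ht₀.1, hθ₀⟩

end CritParam

noncomputable def fSinh (θ t : ℝ) : ℝ := (θ + cosh t) * t / sinh t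

lemma fSinh_arsinh (θ x : ℝ) : fSinh θ (arsinh x) = (θ + √(1 + x ^ 2)) * arsinh x / x := by
  rw [fSinh, cosh_arsinh, sinh_arsinh]

lemma hasDerivAt_fSinh (θ : ℝ) {t : ℝ} (ht : 0 < t) :
    HasDerivAt (fSinh θ) ((t * cosh t - sinh t) / sinh t ^ 2 * (critParam t - θ)) t := by
  have hD := (sub_pos.2 (sinh_lt_mul_cosh ht)).ne'
  have hnum : HasDerivAt (fun t => (θ + cosh t) * t) (sinh t * t + (θ + cosh t) * 1) t :=
    ((hasDerivAt_cosh t).const_add θ).mul (hasDerivAt_id' t)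
  refine (hnum.div (hasDerivAt_sinh t) (sinh_pos_iff.2 ht).ne').congr_deriv ?_
  rw [div_mul_eq_mul_div, critParam, mul_sub, mul_div_cancel₀ _ hD]
  congr 1
  linear_combination (-t) * cosh_sq t

lemma exists_fSinh_lt {θ : ℝ} (hθ : 2 < θ) :
    ∃ t₀, 0 < t₀ ∧ ∀ t, 0 < t → t ≠ t₀ → fSinh θ t₀ < fSinh θ t := by
  obtain ⟨t₀, ht₀, hθ₀⟩ := exists_critParam_eq hθ
  have hscale (t : ℝ) (ht : 0 < t) : 0 < (t * cosh t - sinh t) / sinh t ^ 2 :=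
    div_pos (sub_pos.2 (sinh_lt_mul_cosh ht)) (pow_pos (sinh_pos_iff.2 ht) 2)
  refine ⟨t₀, ht₀, fun t ht htt₀ => apply_lt_of_hasDerivAt_neg_of_pos ht₀
    (fun s hs => hasDerivAt_fSinh θ hs) (fun s hs hst₀ => ?_) (fun s hst₀ => ?_) ht htt₀⟩
  · exact mul_neg_of_pos_of_neg (hscale s hs)
      (sub_neg.2 (hθ₀ ▸ strictMonoOn_critParam hs ht₀ hst₀))
  · have hs := ht₀.trans hst₀
    exact mul_pos (hscale s hs) (sub_pos.2 (hθ₀ ▸ strictMonoOn_critParam ht₀ hs hst₀))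

theorem stmt1 (θ : ℝ) (hθ : 2 < θ) :
    ∃! x₀ : ℝ, 0 < x₀ ∧ ∀ x : ℝ, 0 < x → x ≠ x₀ →
      (θ + Real.sqrt (1 + x₀ ^ 2)) * Real.arsinh x₀ / x₀ <
        (θ + Real.sqrt (1 + x ^ 2)) * Real.arsinh x / x := by
  obtain ⟨t₀, ht₀, hmin⟩ := exists_fSinh_lt hθ
  have hx₀ : 0 < sinh t₀ := sinh_pos_iff.2 ht₀
  have hlt : ∀ x, 0 < x → x ≠ sinh t₀ →
      (θ + √(1 + sinh t₀ ^ 2)) * arsinh (sinh t₀) / sinh t₀ <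
        (θ + √(1 + x ^ 2)) * arsinh x / x := by
    intro x hx hne
    rw [← fSinh_arsinh, ← fSinh_arsinh, arsinh_sinh]
    exact hmin _ (arsinh_pos_iff.2 hx) fun h => hne (by rw [← h, sinh_arsinh])
  refine ⟨sinh t₀, ⟨hx₀, hlt⟩, fun y ⟨hy, hymin⟩ => ?_⟩
  by_contra hne
  exact (hymin _ hx₀ (Ne.symm hne)).asymm (hlt y hy hne)
end

section
/- For every real θ ≤ 2 and every x > 0, one has (1 + θ)·x < (θ + √(1 + x²))·arcsinh(x). -/
/-!
Put `t = arsinh x`, so that `x = sinh t` and `√(1 + x²) = cosh t`. The claim becomes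
`sinh t - t cosh t < θ (t - sinh t)`; since `t < sinh t`, the right side decreases in `θ`, so it
suffices to take `θ = 2`, i.e. to prove `3 sinh t < t (2 + cosh t)` for `t > 0`. That inequality
follows by differentiating three times: each of `t cosh t - sinh t`, `t sinh t - 2 cosh t + 2` and
`t (2 + cosh t) - 3 sinh t` vanishes at `0` and has the previous one as its derivative.
-/

open Real Set

lemma pos_of_hasDerivAt_of_pos_s2 {f f' : ℝ → ℝ} (hf : ∀ t, HasDerivAt f (f' t) t) (h0 : f 0 = 0)
    (hf' : ∀ t, 0 < t → 0 < f' t) {t : ℝ} (ht : 0 < t) : 0 < f t := by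
  have hmono : StrictMonoOn f (Ici 0) :=
    strictMonoOn_of_hasDerivWithinAt_pos (convex_Ici 0)
      (fun s _ => (hf s).continuousAt.continuousWithinAt)
      (fun s _ => (hf s).hasDerivWithinAt)
      (fun s hs => hf' s (by simpa using hs))
  simpa [h0] using hmono self_mem_Ici ht.le ht

namespace Real

lemma sinh_lt_mul_cosh {t : ℝ} (ht : 0 < t) : sinh t < t * cosh t := by
  have h := pos_of_hasDerivAt_of_pos_s2
    (fun s => ((hasDerivAt_id s).mul (hasDerivAt_cosh s)).sub (hasDerivAt_sinh s))
    (by simp) (fun s hs => by simpa using mul_pos hs (sinh_pos_iff.2 hs)) ht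
  simpa using h

lemma two_mul_cosh_sub_two_lt_mul_sinh {t : ℝ} (ht : 0 < t) : 2 * cosh t - 2 < t * sinh t := by
  have h := pos_of_hasDerivAt_of_pos_s2
    (fun s => (((hasDerivAt_id s).mul (hasDerivAt_sinh s)).sub
      ((hasDerivAt_cosh s).const_mul 2)).add_const 2)
    (by simp) (fun s hs => by simp only [one_mul, id_eq]; linarith [sinh_lt_mul_cosh hs]) ht
  simp only [Pi.sub_apply, Pi.mul_apply, id_eq] at h
  linarith

lemma three_mul_sinh_lt_mul_two_add_cosh {t : ℝ} (ht : 0 < t) :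
    3 * sinh t < t * (2 + cosh t) := by
  have h := pos_of_hasDerivAt_of_pos_s2
    (fun s => ((hasDerivAt_id s).mul ((hasDerivAt_cosh s).const_add 2)).sub
      ((hasDerivAt_sinh s).const_mul 3))
    (by simp) (fun s hs => by
      simp only [one_mul, id_eq]
      linarith [two_mul_cosh_sub_two_lt_mul_sinh hs]) ht
  simp only [Pi.sub_apply, Pi.mul_apply, id_eq] at h
  linarith

lemma mul_sinh_lt_add_cosh_mul {θ t : ℝ} (hθ : θ ≤ 2) (ht : 0 < t) :
    (1 + θ) * sinh t < (θ + cosh t) * t := by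
  have h3 := three_mul_sinh_lt_mul_two_add_cosh ht
  have hsinh : t < sinh t := self_lt_sinh_iff.2 ht
  nlinarith [mul_nonneg (sub_nonneg.2 hθ) (sub_nonneg.2 hsinh.le)]

end Real

theorem stmt2 (θ : ℝ) (hθ : θ ≤ 2) (x : ℝ) (hx : 0 < x) :
    (1 + θ) * x < (θ + Real.sqrt (1 + x ^ 2)) * Real.arsinh x := by
  simpa only [sinh_arsinh, cosh_arsinh] using
    mul_sinh_lt_add_cosh_mul hθ (arsinh_pos_iff.2 hx)
end

section
/- For every real θ with 0 ≤ θ ≤ 2, the function h_θ(x) = x·(θ/√(x² + 1) + 1)/(θ + 1/√(x² + 1)) − arcsinh(x) is strictly increasing on (0, ∞). -/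
/-!
Writing `s = √(x² + 1)`, the function is `h_θ(x) = x (θ + s) / (θ s + 1) - arsinh x`, and a direct
computation using `s' = x / s` and `s² = x² + 1` gives
`h_θ'(x) = x² (θ s - θ² + 2) / (s (θ s + 1)²)`.
For `0 ≤ θ ≤ 2` and `x > 0` we have `s > 1`, so `θ s - θ² + 2 = θ (s - 1) + (2 - θ) (1 + θ) > 0`.
-/

open Real

noncomputable def hTheta (θ x : ℝ) : ℝ :=
  x * (θ / √(x ^ 2 + 1) + 1) / (θ + 1 / √(x ^ 2 + 1)) - arsinh x

lemma hTheta_eq (θ x : ℝ) :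
    hTheta θ x = x * (θ + √(x ^ 2 + 1)) / (θ * √(x ^ 2 + 1) + 1) - arsinh x := by
  have hs : 0 < √(x ^ 2 + 1) := by positivity
  rw [hTheta, ← mul_div_mul_right _ _ hs.ne']
  congr 2 <;> field_simp

lemma hasDerivAt_sqrt_sq_add_one (x : ℝ) :
    HasDerivAt (fun y : ℝ => √(y ^ 2 + 1)) (x / √(x ^ 2 + 1)) x := by
  have h := (((hasDerivAt_pow 2 x).add_const 1).sqrt (by positivity))
  convert h using 1
  field_simp
  ring

lemma hasDerivAt_hTheta {θ : ℝ} (hθ : 0 ≤ θ) (x : ℝ) :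
    HasDerivAt (hTheta θ)
      (x ^ 2 * (θ * √(x ^ 2 + 1) - θ ^ 2 + 2) / (√(x ^ 2 + 1) * (θ * √(x ^ 2 + 1) + 1) ^ 2))
      x := by
  have hS := hasDerivAt_sqrt_sq_add_one x
  have hden : θ * √(x ^ 2 + 1) + 1 ≠ 0 := by positivity
  have h := (((hasDerivAt_id' x).mul (hS.const_add θ)).div ((hS.const_mul θ).add_const 1) hden).sub
    (hasDerivAt_arsinh x)
  rw [show hTheta θ = _ from funext (hTheta_eq θ)]
  refine h.congr_deriv ?_
  simp only [Pi.mul_apply]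
  have hs0 : 0 < √(x ^ 2 + 1) := by positivity
  have hs2 : √(x ^ 2 + 1) ^ 2 = x ^ 2 + 1 := sq_sqrt (by positivity)
  rw [add_comm 1 (x ^ 2)]
  generalize √(x ^ 2 + 1) = s at hs0 hs2 hden ⊢
  field_simp
  linear_combination (θ * s + 1) * hs2

lemma mul_sub_sq_add_two_pos {θ s : ℝ} (hθ0 : 0 ≤ θ) (hθ2 : θ ≤ 2) (hs : 1 < s) :
    0 < θ * s - θ ^ 2 + 2 := by
  rcases hθ2.lt_or_eq with hθ2 | rfl
  · nlinarith
  · nlinarith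

lemma hTheta_deriv_pos {θ x : ℝ} (hθ0 : 0 ≤ θ) (hθ2 : θ ≤ 2) (hx : 0 < x) :
    0 < deriv (hTheta θ) x := by
  have hs : 1 < √(x ^ 2 + 1) := by
    rw [lt_sqrt zero_le_one]
    nlinarith
  rw [(hasDerivAt_hTheta hθ0 x).deriv]
  have := mul_sub_sq_add_two_pos hθ0 hθ2 hs
  positivity

theorem stmt15 (θ : ℝ) (hθ0 : 0 ≤ θ) (hθ2 : θ ≤ 2) :
    StrictMonoOn
      (fun x : ℝ => x * (θ / Real.sqrt (x ^ 2 + 1) + 1) / (θ + 1 / Real.sqrt (x ^ 2 + 1))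
        - Real.arsinh x)
      (Set.Ioi (0 : ℝ)) := by
  refine strictMonoOn_of_deriv_pos (convex_Ioi 0)
    (fun x _ => (hasDerivAt_hTheta hθ0 x).continuousAt.continuousWithinAt) fun x hx => ?_
  rw [interior_Ioi] at hx
  exact hTheta_deriv_pos hθ0 hθ2 hx
end
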